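/- Let the weights μ_1, ..., μ_n ≥ 0 be pairwise distinct and monotone in the degrees d, and let X be an optimal symmetric solution of ROCP. If x_{ik} > 0 for some internal index i ∈ {1, ..., q} and some position k ≤ ⌈q/2⌉, then x_{jl} = 0 for all j = 1, ..., i and all l = k+1, ..., ⌈q/2⌉. -/

import Mathlib

open Matrix Finset

/-- The ROCP objective `f(X) = (1/2) ∑_{i,j} ∑_{k,l} μ_i x_{ik} μ_j x_{jl} |k - l|`. -/
noncomputable def fROCP {n q : ℕ} (μ : Fin n → ℝ) (X : Matrix (Fin n) (Fin q) ℝ) : ℝ :=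
  (1 / 2) * ∑ i, ∑ j, ∑ k, ∑ l,
    μ i * X i k * (μ j * X j l) * |((k : ℕ) : ℝ) - ((l : ℕ) : ℝ)|

/-- The feasible set of the relaxed optimal caterpillar problem (ROCP): box constraints,
unique assignment of each vertex, one internal vertex per backbone position, and balance
of vertex degrees (positions `k = 1, ..., q` are represented by `Fin q`, vertex indices
`i = 1, ..., n` by `Fin n`, internal indices being those with `(i : ℕ) < q`). -/
def ROCPFeasible (n q : ℕ) (d : Fin n → ℕ) (X : Matrix (Fin n) (Fin q) ℝ) : Prop :=
  (∀ i k, 0 ≤ X i k ∧ X i k ≤ 1) ∧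
  (∀ i, ∑ k, X i k = 1) ∧
  (∀ k, (∑ i : Fin n, if (i : ℕ) < q then X i k else 0) = 1) ∧
  (∀ k : Fin q, (k : ℕ) ≠ 0 → (k : ℕ) ≠ q - 1 → ∑ i, ((d i : ℝ) - 2) * X i k = 0) ∧
  (∀ k : Fin q, ((k : ℕ) = 0 ∨ (k : ℕ) = q - 1) → ∑ i, ((d i : ℝ) - 2) * X i k = -1)

/-- A matrix is a symmetric solution if `x_{ik} = x_{i, q-k+1}` for all `i`, `k`. -/
def SymmetricSol {n q : ℕ} (X : Matrix (Fin n) (Fin q) ℝ) : Prop :=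
  ∀ i k, X i k = X i k.rev

/-!
Write `c = μ ᵥ* X` for the column weights, so that `f(X) = ½ ∑ c_k c_l |k - l|`. Suppose a
lighter internal vertex `i` sits at a position `A` of the left half and a heavier one `j < i` at a
position `B` with `A < B` still in the left half. Exchanging a small amount `ε` of `i` and `j`
between `A` and `B`, and moving a share of the pendent vertices at `B` to `A` to keep the degree
balance, shifts a weight `t > 0` from column `B` to column `A`. Because `c` is symmetric,
`f` then increases by at least `t (B - A) (c_B - t) > 0`, contradicting optimality.

This settles `j < i`. For `j = i`, every heavier vertex is confined to the first `A + 1` positions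
and their mirror images, so by symmetry it puts mass exactly `1/2` on the first `A + 1` columns,
while every lighter internal vertex puts none there. Counting these columns (positions and
vertices numbered from `0`) gives `A + 1 = i/2 + s`, where `0 < s < 1/2` is the mass of `i`
there, which is impossible.
-/

lemma exists_mem_Icc_mul_eq {a b : ℝ} (ha : 0 ≤ a) (hab : a ≤ b) :
    ∃ s ∈ Set.Icc (0 : ℝ) 1, s * b = a := by
  by_cases hb : b = 0
  · exact ⟨0, by simp, by linarith⟩
  · exact ⟨a / b, ⟨div_nonneg ha (ha.trans hab), div_le_one_of_le₀ hab (ha.trans hab)⟩,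
      div_mul_cancel₀ a hb⟩

lemma abs_sub_add_abs_sub_le {x y u v : ℝ} (hxy : x ≤ y) (hyv : y ≤ v) :
    |y - u| + |y - v| ≤ |x - u| + |x - v| := by
  have := abs_sub_le y x u
  rw [abs_of_nonneg (sub_nonneg.2 hxy)] at this
  rw [abs_of_nonpos (sub_nonpos.2 hyv), abs_of_nonpos (sub_nonpos.2 (hxy.trans hyv))]
  linarith

namespace ROCP

variable {n q : ℕ}

noncomputable def potential (c : Fin q → ℝ) (x : Fin q) : ℝ :=
  ∑ l, c l * |((x : ℕ) : ℝ) - ((l : ℕ) : ℝ)|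

noncomputable def lineEnergy (c : Fin q → ℝ) : ℝ :=
  (1 / 2) * ∑ k, c k * potential c k

noncomputable def transfer (A B : Fin q) : Fin q → ℝ :=
  Pi.single A 1 - Pi.single B 1

lemma sum_transfer_mul (A B : Fin q) (F : Fin q → ℝ) :
    ∑ k, transfer A B k * F k = F A - F B := by
  simp [transfer, sub_mul, sum_sub_distrib, Pi.single_apply]

lemma sum_transfer (A B : Fin q) : ∑ k, transfer A B k = 0 := by
  simpa using sum_transfer_mul A B 1

lemma transfer_apply {A B : Fin q} (hAB : A ≠ B) (p : Fin q) :
    transfer A B p = if p = A then 1 else if p = B then -1 else 0 := by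
  by_cases hpA : p = A
  · subst hpA; simp [transfer, hAB]
  · by_cases hpB : p = B
    · subst hpB; simp [transfer, hAB.symm]
    · simp [transfer, hpA, hpB]

lemma fROCP_eq_lineEnergy (μ : Fin n → ℝ) (X : Matrix (Fin n) (Fin q) ℝ) :
    fROCP μ X = lineEnergy (μ ᵥ* X) := by
  unfold fROCP lineEnergy potential
  congr 1
  simp only [vecMul, dotProduct, sum_mul, mul_sum]
  simp_rw [sum_comm (s := (univ : Finset (Fin n))) (t := (univ : Finset (Fin q)))]
  refine sum_congr rfl fun k _ => sum_congr rfl fun l _ => ?_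
  rw [sum_comm]
  exact sum_congr rfl fun i _ => sum_congr rfl fun j _ => by ring

lemma potential_add_smul (c e : Fin q → ℝ) (t : ℝ) (x : Fin q) :
    potential (c + t • e) x = potential c x + t * potential e x := by
  simp only [potential, Pi.add_apply, Pi.smul_apply, smul_eq_mul, add_mul,
    sum_add_distrib, mul_sum, mul_assoc]

lemma sum_mul_potential_comm (a b : Fin q → ℝ) :
    ∑ k, a k * potential b k = ∑ k, b k * potential a k := by
  simp only [potential, mul_sum]
  rw [sum_comm]
  exact sum_congr rfl fun k _ => sum_congr rfl fun l _ => by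
    rw [abs_sub_comm]; ring

lemma lineEnergy_add_smul_transfer (c : Fin q → ℝ) (t : ℝ) (A B : Fin q) :
    lineEnergy (c + t • transfer A B) = lineEnergy c + t * (potential c A - potential c B)
      - t ^ 2 * |((A : ℕ) : ℝ) - ((B : ℕ) : ℝ)| := by
  have hcross : ∑ k, c k * potential (transfer A B) k = potential c A - potential c B := by
    rw [sum_mul_potential_comm, sum_transfer_mul]
  have hself : ∑ k, transfer A B k * potential (transfer A B) k
      = -2 * |((A : ℕ) : ℝ) - ((B : ℕ) : ℝ)| := by
    rw [sum_transfer_mul]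
    simp only [potential, sum_transfer_mul, sub_self, abs_zero]
    rw [abs_sub_comm ((B : ℕ) : ℝ)]
    ring
  simp only [lineEnergy, potential_add_smul, Pi.add_apply, Pi.smul_apply, smul_eq_mul]
  have hexp : ∀ k, (c k + t * transfer A B k) * (potential c k + t * potential (transfer A B) k)
      = c k * potential c k + t * (c k * potential (transfer A B) k)
        + t * (transfer A B k * potential c k)
        + t ^ 2 * (transfer A B k * potential (transfer A B) k) := fun k => by ring
  simp only [hexp, sum_add_distrib, ← mul_sum, hcross, hself,
    sum_transfer_mul]
  ring

lemma two_mul_potential (c : Fin q → ℝ) (hc : ∀ l, c l = c l.rev) (x : Fin q) :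
    2 * potential c x
      = ∑ l, c l * (|((x : ℕ) : ℝ) - ((l : ℕ) : ℝ)| + |((x : ℕ) : ℝ) - ((l.rev : ℕ) : ℝ)|) := by
  have hrev : ∑ l, c l * |((x : ℕ) : ℝ) - ((l.rev : ℕ) : ℝ)| = potential c x := by
    rw [potential, ← Equiv.sum_comp Fin.revPerm]
    simp [← hc]
  simp only [mul_add, sum_add_distrib, hrev, potential]
  ring

/-- Pairing `l` with `l.rev`: each `x ↦ |x - l| + |x - l.rev|` is nonincreasing on the left half,
and for `l = B` it drops by `2 (B - A)` between `A` and `B`. -/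
lemma mul_add_potential_le_potential (c : Fin q → ℝ) (hc0 : ∀ l, 0 ≤ c l)
    (hc : ∀ l, c l = c l.rev) {A B : Fin q} (hAB : A < B) (hB : 2 * (B : ℕ) < q) :
    (((B : ℕ) : ℝ) - ((A : ℕ) : ℝ)) * c B + potential c B ≤ potential c A := by
  set ψ : Fin q → ℝ := fun l =>
    (|((A : ℕ) : ℝ) - ((l : ℕ) : ℝ)| + |((A : ℕ) : ℝ) - ((l.rev : ℕ) : ℝ)|)
      - (|((B : ℕ) : ℝ) - ((l : ℕ) : ℝ)| + |((B : ℕ) : ℝ) - ((l.rev : ℕ) : ℝ)|)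
  have hAB' : ((A : ℕ) : ℝ) ≤ ((B : ℕ) : ℝ) := by exact_mod_cast hAB.le
  have hψ : ∀ l, 0 ≤ ψ l := fun l => by
    have : (B : ℕ) ≤ l ∨ (B : ℕ) ≤ l.rev := by rw [Fin.val_rev]; omega
    rcases this with h | h
    · have := abs_sub_add_abs_sub_le (u := ((l.rev : ℕ) : ℝ)) (v := ((l : ℕ) : ℝ)) hAB'
        (by exact_mod_cast h)
      simp only [ψ]; linarith
    · have := abs_sub_add_abs_sub_le (u := ((l : ℕ) : ℝ)) (v := ((l.rev : ℕ) : ℝ)) hAB'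
        (by exact_mod_cast h)
      simp only [ψ]; linarith
  have hψB : ψ B = 2 * (((B : ℕ) : ℝ) - ((A : ℕ) : ℝ)) := by
    have hBrev : ((B : ℕ) : ℝ) ≤ ((B.rev : ℕ) : ℝ) := by
      rw [Fin.val_rev]; exact_mod_cast (by omega : (B : ℕ) ≤ q - (B + 1))
    simp only [ψ, sub_self, abs_zero, abs_of_nonpos (sub_nonpos.2 hAB'),
      abs_of_nonpos (sub_nonpos.2 hBrev), abs_of_nonpos (sub_nonpos.2 (hAB'.trans hBrev))]
    ring
  have hsum : 2 * (potential c A - potential c B) = ∑ l, c l * ψ l := by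
    simp only [mul_sub, two_mul_potential c hc, ψ, ← sum_sub_distrib]
  have := single_le_sum (fun l _ => mul_nonneg (hc0 l) (hψ l)) (mem_univ B)
  rw [← hsum, hψB] at this
  linarith

lemma lineEnergy_lt_add_smul_transfer (c : Fin q → ℝ) (hc0 : ∀ l, 0 ≤ c l)
    (hc : ∀ l, c l = c l.rev) {A B : Fin q} (hAB : A < B) (hB : 2 * (B : ℕ) < q) {t : ℝ}
    (ht0 : 0 < t) (htB : t < c B) :
    lineEnergy c < lineEnergy (c + t • transfer A B) := by
  have hAB' : ((A : ℕ) : ℝ) < ((B : ℕ) : ℝ) := by exact_mod_cast hAB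
  rw [lineEnergy_add_smul_transfer, abs_of_neg (sub_neg.2 hAB')]
  have := mul_add_potential_le_potential c hc0 hc hAB hB
  nlinarith [mul_pos (mul_pos ht0 (sub_pos.2 hAB')) (sub_pos.2 htB)]

lemma sum_Ici_rev_eq_sum_Iic {r : Fin q → ℝ} (hr : ∀ P, r P = r P.rev) (A : Fin q) :
    ∑ P ∈ Ici A.rev, r P = ∑ P ∈ Iic A, r P := by
  rw [← Fin.map_revPerm_Iic, sum_map]
  exact sum_congr rfl fun P _ => (hr P).symm

lemma two_mul_sum_Iic_add_sum_Ioo {r : Fin q → ℝ} (hr : ∀ P, r P = r P.rev) {A : Fin q}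
    (hA : A < A.rev) :
    2 * ∑ P ∈ Iic A, r P + ∑ P ∈ Ioo A A.rev, r P = ∑ P, r P := by
  have hA' : (A : ℕ) < A.rev := hA
  rw [Fin.val_rev] at hA'
  have hdisj₁ : Disjoint (Iic A) (Ioo A A.rev) :=
    disjoint_left.2 fun P h₁ h₂ => by simp only [mem_Iic, mem_Ioo] at h₁ h₂; exact h₂.1.not_ge h₁
  have hdisj₂ : Disjoint (Iic A ∪ Ioo A A.rev) (Ici A.rev) :=
    disjoint_left.2 fun P h₁ h₂ => by
      simp only [mem_union, mem_Iic, mem_Ioo, mem_Ici, Fin.le_def, Fin.lt_def, Fin.val_rev] at h₁ h₂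
      omega
  have hunion : Iic A ∪ Ioo A A.rev ∪ Ici A.rev = univ := by
    ext P
    simp only [mem_union, mem_Iic, mem_Ioo, mem_Ici, mem_univ, iff_true, Fin.le_def, Fin.lt_def,
      Fin.val_rev]
    omega
  rw [← hunion, sum_union hdisj₂, sum_union hdisj₁, sum_Ici_rev_eq_sum_Iic hr]
  ring

lemma vecMul_apply_rev {X : Matrix (Fin n) (Fin q) ℝ} (hsym : SymmetricSol X)
    (μ : Fin n → ℝ) (l : Fin q) : (μ ᵥ* X) l = (μ ᵥ* X) l.rev := by
  simp only [vecMul, dotProduct]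
  exact sum_congr rfl fun m _ => by rw [hsym m l]

lemma dotProduct_add_mul_le_vecMul_apply {X : Matrix (Fin n) (Fin q) ℝ} {μ : Fin n → ℝ}
    (hμ : ∀ m, 0 ≤ μ m) {B : Fin q} {π : Fin n → ℝ} (hπ : ∀ m, π m ≤ X m B) {j : Fin n}
    (hπj : π j = 0) : μ ⬝ᵥ π + μ j * X j B ≤ (μ ᵥ* X) B := by
  set r : Fin n → ℝ := fun m => X m B - π m - if m = j then X j B else 0 with hr
  have hr0 : 0 ≤ μ ⬝ᵥ r := dotProduct_nonneg_of_nonneg hμ fun m => by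
    rcases eq_or_ne m j with rfl | hmj
    · simp [hr, hπj]
    · simpa [hr, hmj] using hπ m
  have hcB : (μ ᵥ* X) B = μ ⬝ᵥ r + μ ⬝ᵥ π + μ j * X j B := by
    simp only [hr, vecMul, dotProduct, mul_sub, sum_sub_distrib, mul_ite, mul_zero,
      sum_ite_eq', mem_univ, if_true]
    ring
  linarith

end ROCP

namespace ROCPFeasible

open ROCP

variable {n q : ℕ} {d : Fin n → ℕ} {X : Matrix (Fin n) (Fin q) ℝ}

lemma add_le_one (hX : ROCPFeasible n q d X) {A B : Fin q} (hAB : A ≠ B) (m : Fin n) :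
    X m A + X m B ≤ 1 := by
  rw [← hX.2.1 m, ← sum_pair hAB]
  exact sum_le_sum_of_subset_of_nonneg (subset_univ _) fun p _ _ => (hX.1 m p).1

lemma add_vecMulVec_transfer (hX : ROCPFeasible n q d X) {A B : Fin q} (hAB : A ≠ B)
    {g : Fin n → ℝ} (hg : ∀ m, -X m A ≤ g m ∧ g m ≤ X m B)
    (hg_int : ∑ m : Fin n, (if (m : ℕ) < q then g m else 0) = 0)
    (hg_deg : ∑ m, ((d m : ℝ) - 2) * g m = 0) :
    ROCPFeasible n q d (X + vecMulVec g (transfer A B)) := by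
  obtain ⟨hbox, hrow, hcol, hdeg, hdeg_end⟩ := hX
  have hentry : ∀ m p, (X + vecMulVec g (transfer A B)) m p = X m p + g m * transfer A B p :=
    fun _ _ => rfl
  have hdeg' : ∀ p, ∑ m, ((d m : ℝ) - 2) * (X + vecMulVec g (transfer A B)) m p
      = ∑ m, ((d m : ℝ) - 2) * X m p := fun p => by
    simp only [hentry, mul_add, sum_add_distrib, ← mul_assoc, ← sum_mul, hg_deg, zero_mul,
      add_zero]
  refine ⟨fun m p => ?_, fun m => ?_, fun p => ?_, fun p h0 h1 => ?_, fun p h => ?_⟩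
  · have hm := hg m
    have hsum := add_le_one ⟨hbox, hrow, hcol, hdeg, hdeg_end⟩ hAB m
    rw [hentry, transfer_apply hAB]
    split_ifs with hpA hpB
    · subst hpA; constructor <;> linarith
    · subst hpB; constructor <;> linarith
    · simpa using hbox m p
  · simp only [hentry, sum_add_distrib, ← mul_sum, sum_transfer, hrow, mul_zero, add_zero]
  · simp only [hentry, ite_add_zero, sum_add_distrib, hcol, ← ite_zero_mul, ← sum_mul,
      hg_int, zero_mul, add_zero]
  · rw [hdeg']; exact hdeg p h0 h1
  · rw [hdeg']; exact hdeg_end p h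

lemma sub_two_mul_le_sum_pendent (hX : ROCPFeasible n q d X)
    (hd_int : ∀ i : Fin n, (i : ℕ) < q → 1 < d i) (hd_pend : ∀ i : Fin n, q ≤ (i : ℕ) → d i = 1)
    {B : Fin q} (hB0 : (B : ℕ) ≠ 0) (hB1 : (B : ℕ) ≠ q - 1) {j : Fin n} (hj : (j : ℕ) < q) :
    ((d j : ℝ) - 2) * X j B ≤ ∑ m : Fin n, if q ≤ (m : ℕ) then X m B else 0 := by
  have hsplit : ∀ m : Fin n, ((d m : ℝ) - 2) * X m B
      = (if (m : ℕ) < q then ((d m : ℝ) - 2) * X m B else 0)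
        - (if q ≤ (m : ℕ) then X m B else 0) := fun m => by
    by_cases hm : (m : ℕ) < q
    · simp [hm, not_le.2 hm]
    · simp [hm, le_of_not_gt hm, hd_pend m (le_of_not_gt hm)]
      ring
  have hbal := hX.2.2.2.1 B hB0 hB1
  rw [sum_congr rfl fun m _ => hsplit m, sum_sub_distrib] at hbal
  have hint : ((d j : ℝ) - 2) * X j B
      ≤ ∑ m : Fin n, if (m : ℕ) < q then ((d m : ℝ) - 2) * X m B else 0 := by
    refine le_of_eq_of_le (by simp [hj]) (single_le_sum (fun m _ => ?_) (mem_univ j))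
    split_ifs with hm
    · have : (2 : ℝ) ≤ d m := by exact_mod_cast hd_int m hm
      exact mul_nonneg (by linarith) (hX.1 m B).1
    · exact le_rfl
  linarith

lemma exists_pendent_shift (hX : ROCPFeasible n q d X)
    (hd_int : ∀ i : Fin n, (i : ℕ) < q → 1 < d i) (hd_pend : ∀ i : Fin n, q ≤ (i : ℕ) → d i = 1)
    {B : Fin q} (hB0 : (B : ℕ) ≠ 0) (hB1 : (B : ℕ) ≠ q - 1) {j : Fin n} (hj : (j : ℕ) < q)
    {δ : ℝ} (hδ0 : 0 ≤ δ) (hδ : δ ≤ ((d j : ℝ) - 2) * X j B) :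
    ∃ π : Fin n → ℝ, (∀ m, 0 ≤ π m ∧ π m ≤ X m B) ∧ (∀ m : Fin n, (m : ℕ) < q → π m = 0) ∧
      ∑ m, ((d m : ℝ) - 2) * π m = -δ := by
  set P : Fin n → ℝ := fun m => if q ≤ (m : ℕ) then X m B else 0 with hP
  obtain ⟨s, ⟨hs0, hs1⟩, hs⟩ := exists_mem_Icc_mul_eq hδ0
    (hδ.trans (hX.sub_two_mul_le_sum_pendent hd_int hd_pend hB0 hB1 hj))
  refine ⟨s • P, fun m => ?_, fun m hm => by simp [hP, hm], ?_⟩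
  · have hmB := (hX.1 m B).1
    simp only [hP, Pi.smul_apply, smul_eq_mul]
    split_ifs
    · exact ⟨mul_nonneg hs0 hmB, mul_le_of_le_one_left hmB hs1⟩
    · simpa using hmB
  · have hdP : ∀ m, ((d m : ℝ) - 2) * (s • P) m = -(s * P m) := fun m => by
      simp only [hP, Pi.smul_apply, smul_eq_mul]
      split_ifs with hm
      · rw [hd_pend m hm]; norm_num
      · simp
    simp only [hdP, sum_neg_distrib, ← mul_sum]
    exact congrArg Neg.neg hs

lemma exists_improving_transfer (hX : ROCPFeasible n q d X) {μ : Fin n → ℝ} (hμ : ∀ m, 0 ≤ μ m)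
    (hd_int : ∀ i : Fin n, (i : ℕ) < q → 1 < d i) (hd_pend : ∀ i : Fin n, q ≤ (i : ℕ) → d i = 1)
    {i j : Fin n} (hi : (i : ℕ) < q) (hj : (j : ℕ) < q) (hμij : μ i < μ j) (hdij : d i ≤ d j)
    {A B : Fin q} (hB0 : (B : ℕ) ≠ 0) (hB1 : (B : ℕ) ≠ q - 1)
    (hA : 0 < X i A) (hB : 0 < X j B) :
    ∃ g : Fin n → ℝ, (∀ m, -X m A ≤ g m ∧ g m ≤ X m B) ∧
      ∑ m : Fin n, (if (m : ℕ) < q then g m else 0) = 0 ∧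
      ∑ m, ((d m : ℝ) - 2) * g m = 0 ∧ 0 < μ ⬝ᵥ g ∧ μ ⬝ᵥ g < (μ ᵥ* X) B := by
  have hij : i ≠ j := fun h => hμij.ne (congrArg μ h)
  set ε := min (X i A) (X j B) / 2 with hε
  have hε0 : 0 < ε := by positivity
  have hεA : ε ≤ X i A := by linarith [min_le_left (X i A) (X j B)]
  have hεB : ε < X j B := by linarith [min_le_right (X i A) (X j B)]
  have hdi : (2 : ℝ) ≤ d i := by exact_mod_cast hd_int i hi
  have hdij' : (d i : ℝ) ≤ d j := by exact_mod_cast hdij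
  -- exchanging `ε` of `j` and `i` raises the degree sum of column `A` by `(d j - d i) ε`;
  -- pendent vertices moved from `B` to `A` bring it back to balance
  obtain ⟨π, hπ, hπ_int, hπ_deg⟩ := hX.exists_pendent_shift hd_int hd_pend hB0 hB1 hj
    (δ := ((d j : ℝ) - d i) * ε) (by nlinarith)
    (mul_le_mul (by linarith) hεB.le hε0.le (by linarith))
  have hμπ : 0 ≤ μ ⬝ᵥ π := dotProduct_nonneg_of_nonneg hμ fun m => (hπ m).1
  set g : Fin n → ℝ := Pi.single j ε - Pi.single i ε + π with hg
  have hg_apply : ∀ m, g m = (if m = j then ε else 0) - (if m = i then ε else 0) + π m :=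
    fun m => by simp [hg, Pi.single_apply]
  refine ⟨g, fun m => ?_, ?_, ?_, ?_, ?_⟩
  · have hmA := (hX.1 m A).1
    have hmB := (hX.1 m B).1
    rw [hg_apply]
    rcases eq_or_ne m j with rfl | hmj
    · simp only [if_neg hij.symm, ↓reduceIte, hπ_int m hj]
      constructor <;> linarith
    rcases eq_or_ne m i with rfl | hmi
    · simp only [if_neg hij, ↓reduceIte, hπ_int m hi]
      constructor <;> linarith
    · simp only [if_neg hmj, if_neg hmi]
      constructor <;> linarith [hπ m]
  · have hint : ∀ m : Fin n, (if (m : ℕ) < q then g m else 0)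
        = (if m = j then ε else 0) - (if m = i then ε else 0) := fun m => by
      by_cases hm : (m : ℕ) < q
      · simp [hg_apply, hm, hπ_int m hm]
      · have hmj : m ≠ j := fun h => hm (h ▸ hj)
        have hmi : m ≠ i := fun h => hm (h ▸ hi)
        simp [hm, hmj, hmi]
    simp [sum_congr rfl fun m _ => hint m]
  · change (fun m => (d m : ℝ) - 2) ⬝ᵥ g = 0
    rw [hg, dotProduct_add, dotProduct_sub, dotProduct_single, dotProduct_single]
    change _ + ∑ m, ((d m : ℝ) - 2) * π m = 0
    rw [hπ_deg]
    ring
  · rw [hg, dotProduct_add, dotProduct_sub, dotProduct_single, dotProduct_single]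
    nlinarith
  · have hμj : 0 < μ j := (hμ i).trans_lt hμij
    have hcB := dotProduct_add_mul_le_vecMul_apply hμ (fun m => (hπ m).2) (hπ_int j hj)
    rw [hg, dotProduct_add, dotProduct_sub, dotProduct_single, dotProduct_single]
    nlinarith [mul_lt_mul_of_pos_left hεB hμj, hμ i]

lemma sum_internal_sum_Iic (hX : ROCPFeasible n q d X) (A : Fin q) :
    ∑ m : Fin n, (if (m : ℕ) < q then ∑ P ∈ Iic A, X m P else 0) = (A : ℕ) + 1 := by
  simp only [ite_sum_zero]
  rw [sum_comm, sum_congr rfl fun P _ => hX.2.2.1 P]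
  simp

end ROCPFeasible

namespace ROCP

variable {n q : ℕ}

def HeavierOutside (X : Matrix (Fin n) (Fin q) ℝ) : Prop :=
  ∀ i j : Fin n, (i : ℕ) < q → j < i → ∀ A B : Fin q, A < B → 2 * (B : ℕ) < q →
    0 < X i A → X j B = 0

lemma heavierOutside_of_optimal {d : Fin n → ℕ} {μ : Fin n → ℝ}
    (hμ : ∀ i, 0 ≤ μ i) (hμ_inj : Function.Injective μ)
    (hμ_mono : ∀ i j : Fin n, 2 ≤ d i → 2 ≤ d j → i < j → μ j ≤ μ i)
    (hd_anti : ∀ i j : Fin n, i ≤ j → d j ≤ d i)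
    (hd_int : ∀ i : Fin n, (i : ℕ) < q → 1 < d i)
    (hd_pend : ∀ i : Fin n, q ≤ (i : ℕ) → d i = 1)
    {X : Matrix (Fin n) (Fin q) ℝ} (hX : ROCPFeasible n q d X)
    (hopt : ∀ Y, ROCPFeasible n q d Y → fROCP μ Y ≤ fROCP μ X) (hsym : SymmetricSol X) :
    HeavierOutside X := by
  intro i j hi hji A B hAB hB hA
  by_contra hjB
  have hjB : 0 < X j B := (hX.1 j B).1.lt_of_ne' hjB
  have hj : (j : ℕ) < q := (Fin.lt_def.1 hji).trans hi
  have hμij : μ i < μ j :=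
    (hμ_mono j i (hd_int j hj) (hd_int i hi) hji).lt_of_ne fun h => hji.ne (hμ_inj h).symm
  have hAB' : (A : ℕ) < B := hAB
  obtain ⟨g, hg_box, hg_int, hg_deg, ht_pos, ht_lt⟩ :=
    hX.exists_improving_transfer hμ hd_int hd_pend hi hj hμij (hd_anti j i hji.le)
      (A := A) (B := B) (by omega) (by omega) hA hjB
  have hlt := lineEnergy_lt_add_smul_transfer (μ ᵥ* X)
    (fun l => dotProduct_nonneg_of_nonneg hμ fun m => (hX.1 m l).1) (vecMul_apply_rev hsym μ)
    hAB hB ht_pos ht_lt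
  have hle := hopt _ (hX.add_vecMulVec_transfer hAB.ne hg_box hg_int hg_deg)
  rw [fROCP_eq_lineEnergy, fROCP_eq_lineEnergy, vecMul_add, vecMul_vecMulVec] at hle
  exact hle.not_gt hlt

namespace HeavierOutside

variable {d : Fin n → ℕ} {X : Matrix (Fin n) (Fin q) ℝ}

lemma sum_Iic_eq_half (hout : HeavierOutside X) (hX : ROCPFeasible n q d X)
    (hsym : SymmetricSol X) {i : Fin n} (hi : (i : ℕ) < q) {A : Fin q} (hA : 0 < X i A)
    (hArev : A < A.rev) {m : Fin n} (hm : m < i) : ∑ P ∈ Iic A, X m P = 1 / 2 := by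
  have hmid : ∑ P ∈ Ioo A A.rev, X m P = 0 := sum_eq_zero fun P hP => by
    simp only [mem_Ioo, Fin.lt_def, Fin.val_rev] at hP
    by_cases hP2 : 2 * (P : ℕ) < q
    · exact hout i m hi hm A P (Fin.lt_def.2 hP.1) hP2 hA
    · rw [hsym m P]
      exact hout i m hi hm A P.rev (by rw [Fin.lt_def, Fin.val_rev]; omega)
        (by rw [Fin.val_rev]; omega) hA
  have := two_mul_sum_Iic_add_sum_Ioo (hsym m) hArev
  rw [hmid, hX.2.1 m] at this
  linarith

lemma sum_Iic_eq_zero (hout : HeavierOutside X) (hX : ROCPFeasible n q d X) {i : Fin n}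
    {A B : Fin q} (hAB : A < B) (hB : 2 * (B : ℕ) < q) (hiB : 0 < X i B) {m : Fin n}
    (hm : i < m) (hmq : (m : ℕ) < q) : ∑ P ∈ Iic A, X m P = 0 :=
  sum_eq_zero fun P hP => by
    by_contra hmP
    exact hiB.ne' (hout m i hmq hm P B ((mem_Iic.1 hP).trans_lt hAB) hB
      ((hX.1 m P).1.lt_of_ne' hmP))

lemma apply_eq_zero (hout : HeavierOutside X) (hX : ROCPFeasible n q d X)
    (hsym : SymmetricSol X) {i : Fin n} (hi : (i : ℕ) < q) {A B : Fin q} (hAB : A < B)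
    (hB : 2 * (B : ℕ) < q) (hA : 0 < X i A) : X i B = 0 := by
  by_contra hiB
  have hiB : 0 < X i B := (hX.1 i B).1.lt_of_ne' hiB
  have hAB' : (A : ℕ) < B := hAB
  have hArev : A < A.rev := by rw [Fin.lt_def, Fin.val_rev]; omega
  have hB_mem : B ∈ Ioo A A.rev := by
    simp only [mem_Ioo, Fin.lt_def, Fin.val_rev]; omega
  set s := ∑ P ∈ Iic A, X i P with hs
  have hs_pos : 0 < s := hA.trans_le (single_le_sum (fun P _ => (hX.1 i P).1) (mem_Iic.2 le_rfl))
  have hs_lt : 2 * s + X i B ≤ 1 := by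
    have := two_mul_sum_Iic_add_sum_Ioo (hsym i) hArev
    rw [hX.2.1 i] at this
    linarith [single_le_sum (fun P _ => (hX.1 i P).1) hB_mem]
  have hrow : ∀ m : Fin n, (if (m : ℕ) < q then ∑ P ∈ Iic A, X m P else 0)
      = (if m < i then 1 / 2 else 0) + (if m = i then s else 0) := fun m => by
    rcases lt_trichotomy m i with hm | rfl | hm
    · simp [hm, hm.ne, (Fin.lt_def.1 hm).trans hi, hout.sum_Iic_eq_half hX hsym hi hA hArev hm]
    · simp [hi, hs]
    · by_cases hmq : (m : ℕ) < q
      · simp [hm.not_gt, hm.ne', hmq, hout.sum_Iic_eq_zero hX hAB hB hiB hm hmq]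
      · simp [hm.not_gt, hm.ne', hmq]
  have hcount := hX.sum_internal_sum_Iic A
  rw [sum_congr rfl fun m _ => hrow m, sum_add_distrib, ← sum_filter, filter_gt_eq_Iio,
    sum_const, Fin.card_Iio, sum_ite_eq' univ i, if_pos (mem_univ i), nsmul_eq_mul] at hcount
  have h₁ : (i : ℕ) < 2 * (A : ℕ) + 2 := by
    exact_mod_cast (by linarith : ((i : ℕ) : ℝ) < 2 * (A : ℕ) + 2)
  have h₂ : 2 * (A : ℕ) + 1 < i := by
    exact_mod_cast (by linarith : 2 * ((A : ℕ) : ℝ) + 1 < (i : ℕ))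
  omega

end HeavierOutside

end ROCP

theorem internal_exclusion_in_optimal_symmetric_solution (n q : ℕ)
    (d : Fin n → ℕ) (μ : Fin n → ℝ)
    (hμ : ∀ i, 0 ≤ μ i)
    (hμ_inj : Function.Injective μ)
    (hμ_mono : ∀ i j : Fin n, 2 ≤ d i → 2 ≤ d j → i < j → μ j ≤ μ i)
    (hd_anti : ∀ i j : Fin n, i ≤ j → d j ≤ d i)
    (hd_int : ∀ i : Fin n, (i : ℕ) < q → 1 < d i)
    (hd_pend : ∀ i : Fin n, q ≤ (i : ℕ) → d i = 1)
    (X : Matrix (Fin n) (Fin q) ℝ)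
    (hfeas : ROCPFeasible n q d X)
    (hopt : ∀ Y, ROCPFeasible n q d Y → fROCP μ Y ≤ fROCP μ X)
    (hsym : SymmetricSol X)
    (i : Fin n) (hi : (i : ℕ) < q)
    (k : ℕ) (hk1 : 1 ≤ k) (hkc : k ≤ (q + 1) / 2)
    (hxi : 0 < X i ⟨k - 1, by omega⟩) :
    ∀ (j : Fin n), j ≤ i → ∀ (l : ℕ) (hl1 : k + 1 ≤ l) (hl2 : l ≤ (q + 1) / 2),
      X j ⟨l - 1, by omega⟩ = 0 := by
  intro j hj l hl1 hl2
  have hout : ROCP.HeavierOutside X :=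
    ROCP.heavierOutside_of_optimal hμ hμ_inj hμ_mono hd_anti hd_int hd_pend hfeas hopt hsym
  have hAB : (⟨k - 1, by omega⟩ : Fin q) < ⟨l - 1, by omega⟩ := Fin.mk_lt_mk.2 (by omega)
  have hB : 2 * (l - 1) < q := by omega
  rcases hj.lt_or_eq with hji | rfl
  · exact hout i j hi hji _ _ hAB hB hxi
  · exact hout.apply_eq_zero hfeas hsym hi hAB hB hxi
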